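/- arXiv:math/9906093 — 2 statements merged into one kernel-verified Lean document; each statement's English description precedes it below -/
import Mathlib

section
/- Fix an integer k ≥ 1 and a real number γ ∈ (0, 2π), and set h(z) = e^{iγz} / (z^k (e^{2πiz} − 1)). Then the integral of h over the vertical segment {−(m+1/2) + iy : −m ≤ y ≤ m} tends to 0 as the positive integer m tends to infinity. -/
/-!
On the line `Re z = -(m + 1/2)` we have `e^{2πiz} = -e^{-2π Im z}`, so the denominator never
gets close to zero: `|e^{2πiz} - 1| = e^{-2πy} + 1` for `y = Im z`. Together with
`|e^{iγz}| = e^{-γy}` this bounds `|h|` by `e^{-δ|y|} / (m + 1/2)^k` with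
`δ = min γ (2π - γ) > 0`. The exponential factor has integral at most `2/δ` over any symmetric
interval, so the integral is `O((m + 1/2)^{-k})`, which tends to `0` because `k ≥ 1`.
-/

open Complex Filter

lemma Real.exp_neg_mul_div_exp_neg_mul_add_one_le (γ a y : ℝ) :
    Real.exp (-(γ * y)) / (Real.exp (-(a * y)) + 1) ≤ Real.exp (-(min γ (a - γ) * |y|)) := by
  rcases le_or_gt 0 y with hy | hy
  · calc Real.exp (-(γ * y)) / (Real.exp (-(a * y)) + 1)
        ≤ Real.exp (-(γ * y)) :=
          div_le_self (Real.exp_nonneg _) (by linarith [Real.exp_pos (-(a * y))])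
      _ ≤ Real.exp (-(min γ (a - γ) * |y|)) := by
        rw [abs_of_nonneg hy]
        gcongr
        exact min_le_left _ _
  · calc Real.exp (-(γ * y)) / (Real.exp (-(a * y)) + 1)
        ≤ Real.exp (-(γ * y)) / Real.exp (-(a * y)) := by gcongr; linarith
      _ = Real.exp (-((a - γ) * -y)) := by rw [← Real.exp_sub]; ring_nf
      _ ≤ Real.exp (-(min γ (a - γ) * |y|)) := by
        rw [abs_of_neg hy]
        gcongr
        · linarith
        · exact min_le_right _ _

lemma Real.integral_exp_neg_mul_abs_le {δ : ℝ} (hδ : 0 < δ) {a : ℝ} (ha : 0 ≤ a) :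
    ∫ y in -a..a, Real.exp (-(δ * |y|)) ≤ 2 / δ := by
  set f : ℝ → ℝ := fun y => Real.exp (-(δ * |y|))
  have hf : ∀ b c, IntervalIntegrable f MeasureTheory.volume b c := fun b c =>
    (by fun_prop : Continuous f).intervalIntegrable b c
  have hhalf : ∫ y in (0 : ℝ)..a, f y = (1 - Real.exp (-(δ * a))) / δ := by
    have hneg : (-δ) ≠ 0 := by linarith
    rw [intervalIntegral.integral_congr (g := fun y => Real.exp (-δ * y)) fun y hy => by
        rw [Set.uIcc_of_le ha] at hy
        simp [f, abs_of_nonneg hy.1],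
      intervalIntegral.integral_comp_mul_left (fun y => Real.exp y) hneg, integral_exp]
    simp only [smul_eq_mul, mul_zero, Real.exp_zero]
    field_simp
    ring_nf
  have hsymm : ∫ y in -a..0, f y = ∫ y in (0 : ℝ)..a, f y := by
    simpa [f] using (intervalIntegral.integral_comp_neg (a := 0) (b := a) f).symm
  rw [← intervalIntegral.integral_add_adjacent_intervals (hf _ 0) (hf 0 _), hsymm, hhalf]
  have : 0 < Real.exp (-(δ * a)) := Real.exp_pos _
  rw [← add_div, div_le_div_iff_of_pos_right hδ]
  linarith

theorem Complex.exp_two_pi_mul_I_mul_of_re_eq_add_half {z : ℂ} {n : ℤ} (hz : z.re = n + 1 / 2) :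
    exp (2 * Real.pi * I * z) = -Real.exp (-(2 * Real.pi * z.im)) := by
  have : 2 * Real.pi * I * z =
      n * (2 * Real.pi * I) + Real.pi * I + ↑(-(2 * Real.pi * z.im)) := by
    conv_lhs => rw [← re_add_im z, hz]
    push_cast
    ring_nf
    rw [I_sq]
    ring
  rw [this, exp_add, exp_add, exp_int_mul_two_pi_mul_I, exp_pi_mul_I, ofReal_exp]
  ring

theorem Complex.norm_exp_two_pi_mul_I_mul_sub_one_of_re_eq_add_half {z : ℂ} {n : ℤ}
    (hz : z.re = n + 1 / 2) :
    ‖exp (2 * Real.pi * I * z) - 1‖ = Real.exp (-(2 * Real.pi * z.im)) + 1 := by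
  rw [exp_two_pi_mul_I_mul_of_re_eq_add_half hz, ← neg_add', norm_neg, ← ofReal_one,
    ← ofReal_add, norm_real, Real.norm_of_nonneg (by positivity)]

theorem Complex.norm_exp_I_mul_ofReal_mul (γ : ℝ) (z : ℂ) :
    ‖exp (I * γ * z)‖ = Real.exp (-(γ * z.im)) := by
  simp [norm_exp, mul_comm]

theorem Complex.norm_exp_div_pow_mul_exp_sub_one_le {z : ℂ} {n : ℤ} (hz : z.re = n + 1 / 2)
    (γ : ℝ) (k : ℕ) :
    ‖exp (I * γ * z) / (z ^ k * (exp (2 * Real.pi * I * z) - 1))‖ ≤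
      Real.exp (-(min γ (2 * Real.pi - γ) * |z.im|)) / ‖z‖ ^ k := by
  rw [norm_div, norm_mul, norm_pow, norm_exp_I_mul_ofReal_mul,
    norm_exp_two_pi_mul_I_mul_sub_one_of_re_eq_add_half hz, div_mul_eq_div_div_swap]
  exact div_le_div_of_nonneg_right (Real.exp_neg_mul_div_exp_neg_mul_add_one_le _ _ _)
    (by positivity : (0 : ℝ) ≤ ‖z‖ ^ k)

/-- Let `k ≥ 1`, `γ ∈ (0, 2π)` and `h(z) = e^{iγz}/(z^k (e^{2πiz} - 1))`. The complex
line integral of `h` over the vertical segment `{-(m+1/2) + iy : -m ≤ y ≤ m}` tends to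
`0` as the positive integer `m` tends to infinity. -/
theorem statement9 (k : ℕ) (hk : 1 ≤ k)
    (γ : ℝ) (hγ₀ : 0 < γ) (hγ₁ : γ < 2 * Real.pi)
    (h : ℂ → ℂ)
    (hh : ∀ z : ℂ, h z = Complex.exp (Complex.I * γ * z) /
      (z ^ k * (Complex.exp (2 * Real.pi * Complex.I * z) - 1))) :
    Tendsto (fun m : ℕ =>
        Complex.I * ∫ y in -(m : ℝ)..(m : ℝ),
          h (-(((m : ℝ) + 1/2 : ℝ) : ℂ) + Complex.I * (y : ℂ)))
      atTop (nhds 0) := by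
  set δ := min γ (2 * Real.pi - γ)
  have hδ : 0 < δ := lt_min hγ₀ (by linarith)
  have hline (m : ℕ) (y : ℝ) : ‖h (-(((m : ℝ) + 1/2 : ℝ) : ℂ) + I * y)‖ ≤
      Real.exp (-(δ * |y|)) / ((m : ℝ) + 1/2) ^ k := by
    set z := -(((m : ℝ) + 1/2 : ℝ) : ℂ) + I * y
    have hre : z.re = ((-(m + 1) : ℤ) : ℝ) + 1 / 2 := by simp [z]; ring
    have him : z.im = y := by simp [z]
    rw [hh, ← him]
    refine (norm_exp_div_pow_mul_exp_sub_one_le hre γ k).trans ?_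
    gcongr
    calc (m : ℝ) + 1/2 = |z.re| := by rw [hre]; push_cast; rw [abs_of_neg (by linarith)]; ring
      _ ≤ ‖z‖ := abs_re_le_norm z
  have hbound (m : ℕ) :
      ‖I * ∫ y in -(m : ℝ)..(m : ℝ), h (-(((m : ℝ) + 1/2 : ℝ) : ℂ) + I * y)‖ ≤
        2 / δ / ((m : ℝ) + 1/2) ^ k := by
    rw [norm_mul, norm_I, one_mul]
    calc _ ≤ ∫ y in -(m : ℝ)..(m : ℝ), Real.exp (-(δ * |y|)) / ((m : ℝ) + 1/2) ^ k :=
          intervalIntegral.norm_integral_le_of_norm_le (by linarith [m.cast_nonneg (α := ℝ)])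
            (.of_forall fun y _ => hline m y) ((by fun_prop : Continuous _).intervalIntegrable _ _)
      _ ≤ 2 / δ / ((m : ℝ) + 1/2) ^ k := by
        rw [intervalIntegral.integral_div]
        gcongr
        exact Real.integral_exp_neg_mul_abs_le hδ m.cast_nonneg
  refine squeeze_zero_norm hbound (tendsto_const_nhds.div_atTop ?_)
  exact (tendsto_pow_atTop (by omega)).comp
    (tendsto_atTop_add_const_right _ _ tendsto_natCast_atTop_atTop)
end

section
/- Fix an integer k ≥ 1 and a real number γ ∈ (0, 2π), and set h(z) = e^{iγz} / (z^k (e^{2πiz} − 1)). Then the integral of h over the positively oriented boundary of the rectangle with vertices −(m+1/2) − im, (m+1/2) − im, (m+1/2) + im, −(m+1/2) + im tends to 0 as the positive integer m tends to infinity. -/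
/-!
Write `h(z) = q(z) / z^k` with `q(z) = e^{iγz} / (e^{2πiz} - 1)`, and let
`c = min(γ, 2π - γ) > 0`. With `y = Im z` we have
`|e^{iγz}| = e^{-γy} ≤ e^{-c|y|} max(1, e^{-2πy})`, so `|q(z)| ≤ K e^{-c|y|}` wherever
`max(1, e^{-2πy}) ≤ K |e^{2πiz} - 1|`. On the horizontal sides `|y| = m ≥ 1` and `K = 2` works,
so their integrals are `O(m e^{-cm})`. On the vertical sides `Re z` is a half-integer, so
`e^{2πiz} = -e^{-2πy}` and `K = 1` works; as `|z|^k ≥ m` there, their integrals are at most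
`(∫ e^{-c|y|} dy) / m`.
-/

open Complex Filter MeasureTheory Set

open scoped Real

lemma exp_neg_mul_le_exp_neg_min_mul_abs_mul_max (γ y : ℝ) :
    Real.exp (-γ * y) ≤
      Real.exp (-min γ (2 * π - γ) * |y|) * max 1 (Real.exp (-(2 * π) * y)) := by
  rcases le_total 0 y with hy | hy
  · calc Real.exp (-γ * y) ≤ Real.exp (-min γ (2 * π - γ) * |y|) := by
          rw [abs_of_nonneg hy]
          gcongr
          exact min_le_left _ _
      _ ≤ _ := le_mul_of_one_le_right (Real.exp_nonneg _) (le_max_left _ _)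
  · calc Real.exp (-γ * y) = Real.exp ((2 * π - γ) * y) * Real.exp (-(2 * π) * y) := by
          rw [← Real.exp_add]; ring_nf
      _ ≤ _ := by
          refine mul_le_mul (Real.exp_le_exp.2 ?_) (le_max_right _ _) (Real.exp_nonneg _)
            (Real.exp_nonneg _)
          rw [abs_of_nonpos hy]
          nlinarith [min_le_right γ (2 * π - γ)]

lemma max_one_exp_le_two_mul_abs_exp_sub_one {t : ℝ} (ht : 1 ≤ |t|) :
    max 1 (Real.exp t) ≤ 2 * |Real.exp t - 1| := by
  have hinv : Real.exp t * Real.exp (-t) = 1 := by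
    rw [← Real.exp_add, add_neg_cancel, Real.exp_zero]
  rcases le_abs'.1 ht with ht | ht
  · have : 2 ≤ Real.exp (-t) := by linarith [Real.add_one_le_exp (-t)]
    have : Real.exp t ≤ 1 / 2 := by nlinarith [Real.exp_pos t]
    rw [max_eq_left (by linarith), abs_of_neg (by linarith)]
    linarith
  · have : 2 ≤ Real.exp t := by linarith [Real.add_one_le_exp t]
    rw [max_eq_right (by linarith), abs_of_pos (by linarith)]
    linarith

lemma norm_cexp_I_mul (γ : ℝ) (z : ℂ) : ‖cexp (I * γ * z)‖ = Real.exp (-γ * z.im) := by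
  rw [norm_exp]; congr 1; simp

lemma norm_cexp_two_pi_I_mul (z : ℂ) :
    ‖cexp (2 * π * I * z)‖ = Real.exp (-(2 * π) * z.im) := by
  rw [norm_exp]; congr 1; simp

lemma norm_cexp_div_cexp_sub_one_le (γ : ℝ) {K : ℝ} {z : ℂ}
    (hK : max 1 (Real.exp (-(2 * π) * z.im)) ≤ K * ‖cexp (2 * π * I * z) - 1‖) :
    ‖cexp (I * γ * z) / (cexp (2 * π * I * z) - 1)‖ ≤
      K * Real.exp (-min γ (2 * π - γ) * |z.im|) := by
  have hden : 0 < K * ‖cexp (2 * π * I * z) - 1‖ :=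
    (zero_lt_one.trans_le (le_max_left _ _)).trans_le hK
  have hden' : 0 < ‖cexp (2 * π * I * z) - 1‖ := norm_pos_iff.2 fun h => by simp [h] at hden
  rw [norm_div, div_le_iff₀ hden', norm_cexp_I_mul]
  calc Real.exp (-γ * z.im)
      ≤ Real.exp (-min γ (2 * π - γ) * |z.im|) * max 1 (Real.exp (-(2 * π) * z.im)) :=
        exp_neg_mul_le_exp_neg_min_mul_abs_mul_max γ z.im
    _ ≤ Real.exp (-min γ (2 * π - γ) * |z.im|) * (K * ‖cexp (2 * π * I * z) - 1‖) := by
        gcongr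
    _ = _ := by ring

lemma cexp_two_pi_I_mul_of_re_eq_int_add_half {z : ℂ} {n : ℤ} (hn : z.re = n + 1/2) :
    cexp (2 * π * I * z) = -(Real.exp (-(2 * π) * z.im) : ℂ) := by
  have : 2 * π * I * z = n * (2 * π * I) + π * I + ((-(2 * π) * z.im : ℝ) : ℂ) := by
    conv_lhs => rw [← re_add_im z, hn]
    push_cast
    ring_nf
    rw [I_sq]
    ring
  rw [this, exp_add, exp_add, exp_int_mul_two_pi_mul_I, exp_pi_mul_I, ofReal_exp]
  ring

lemma norm_cexp_div_cexp_sub_one_le_of_one_le_abs_im (γ : ℝ) {z : ℂ} (hz : 1 ≤ |z.im|) :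
    ‖cexp (I * γ * z) / (cexp (2 * π * I * z) - 1)‖ ≤
      2 * Real.exp (-min γ (2 * π - γ) * |z.im|) := by
  refine norm_cexp_div_cexp_sub_one_le γ ?_
  have ht : 1 ≤ |-(2 * π) * z.im| := by
    rw [abs_mul, abs_neg, abs_of_pos Real.two_pi_pos]
    nlinarith [Real.pi_gt_three]
  calc max 1 (Real.exp (-(2 * π) * z.im))
      ≤ 2 * |Real.exp (-(2 * π) * z.im) - 1| := max_one_exp_le_two_mul_abs_exp_sub_one ht
    _ ≤ 2 * ‖cexp (2 * π * I * z) - 1‖ := by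
        gcongr
        simpa [norm_cexp_two_pi_I_mul] using abs_norm_sub_norm_le (cexp (2 * π * I * z)) 1

lemma norm_cexp_div_cexp_sub_one_le_of_re_eq_int_add_half (γ : ℝ) {z : ℂ} {n : ℤ}
    (hn : z.re = n + 1/2) :
    ‖cexp (I * γ * z) / (cexp (2 * π * I * z) - 1)‖ ≤
      Real.exp (-min γ (2 * π - γ) * |z.im|) := by
  have hden : ‖cexp (2 * π * I * z) - 1‖ = Real.exp (-(2 * π) * z.im) + 1 := by
    rw [cexp_two_pi_I_mul_of_re_eq_int_add_half hn, ← neg_add', norm_neg,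
      ← ofReal_one, ← ofReal_add, norm_real, Real.norm_of_nonneg (by positivity)]
  refine (norm_cexp_div_cexp_sub_one_le γ (K := 1) ?_).trans_eq (one_mul _)
  rw [hden, one_mul]
  exact max_le (by linarith [Real.exp_pos (-(2 * π) * z.im)]) (by linarith)

lemma norm_div_pow_le_of_le_norm {𝕜 : Type*} [NormedDivisionRing 𝕜] {w z : 𝕜} {k : ℕ} {r : ℝ}
    (hk : 1 ≤ k) (hr : 1 ≤ r) (hrz : r ≤ ‖z‖) : ‖w / z ^ k‖ ≤ ‖w‖ / r := by
  rw [norm_div, norm_pow]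
  exact div_le_div_of_nonneg_left (norm_nonneg w) (by linarith)
    (hrz.trans (le_self_pow₀ (hr.trans hrz) (by omega)))

lemma norm_cexp_div_pow_mul_le_of_one_le_abs_im (γ : ℝ) {k : ℕ} (hk : 1 ≤ k) {z : ℂ}
    (hz : 1 ≤ |z.im|) :
    ‖cexp (I * γ * z) / (z ^ k * (cexp (2 * π * I * z) - 1))‖ ≤
      2 * Real.exp (-min γ (2 * π - γ) * |z.im|) := by
  rw [div_mul_eq_div_div_swap]
  refine (norm_div_pow_le_of_le_norm hk le_rfl (hz.trans (abs_im_le_norm z))).trans ?_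
  simpa using norm_cexp_div_cexp_sub_one_le_of_one_le_abs_im γ hz

lemma norm_cexp_div_pow_mul_le_of_re_eq_int_add_half (γ : ℝ) {k : ℕ} (hk : 1 ≤ k) {z : ℂ}
    {n : ℤ} {r : ℝ} (hn : z.re = n + 1/2) (hr : 1 ≤ r) (hrz : r ≤ |z.re|) :
    ‖cexp (I * γ * z) / (z ^ k * (cexp (2 * π * I * z) - 1))‖ ≤
      Real.exp (-min γ (2 * π - γ) * |z.im|) / r := by
  rw [div_mul_eq_div_div_swap]
  exact (norm_div_pow_le_of_le_norm hk hr (hrz.trans (abs_re_le_norm z))).trans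
    (div_le_div_of_nonneg_right (norm_cexp_div_cexp_sub_one_le_of_re_eq_int_add_half γ hn)
      (by linarith))

lemma integrable_exp_neg_mul_abs {c : ℝ} (hc : 0 < c) :
    Integrable (fun y : ℝ => Real.exp (-c * |y|)) := by
  have hIoi : IntegrableOn (fun y : ℝ => Real.exp (-c * |y|)) (Ioi 0) :=
    (exp_neg_integrableOn_Ioi 0 hc).congr_fun
      (fun y hy => by rw [abs_of_pos (mem_Ioi.1 hy)]) measurableSet_Ioi
  have hIio : IntegrableOn (fun y : ℝ => Real.exp (-c * |-y|)) (Iio 0) :=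
    IntegrableOn.comp_neg_Iio (μ := volume) (f := fun y : ℝ => Real.exp (-c * |y|))
      (by rwa [neg_zero])
  simp only [abs_neg] at hIio
  rw [← integrableOn_univ, ← Iio_union_Ici]
  exact hIio.union ((integrableOn_Ici_iff_integrableOn_Ioi (by simp)).2 hIoi)

lemma tendsto_integral_neg_nat_nat_of_norm_le_div {F : ℕ → ℝ → ℂ} {g : ℝ → ℝ} (hg : Integrable g)
    (hg₀ : 0 ≤ g) (hF : ∀ᶠ m : ℕ in atTop, ∀ y, ‖F m y‖ ≤ g y / m) :
    Tendsto (fun m : ℕ => ∫ y in -(m : ℝ)..m, F m y) atTop (nhds 0) := by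
  refine squeeze_zero_norm' ?_ (tendsto_const_div_atTop_nhds_zero_nat (∫ y, g y))
  filter_upwards [hF] with m hm
  have hm_le : -(m : ℝ) ≤ m := by simp
  calc ‖∫ y in -(m : ℝ)..m, F m y‖
      ≤ ∫ y in -(m : ℝ)..m, g y / m :=
        intervalIntegral.norm_integral_le_of_norm_le hm_le (.of_forall fun y _ => hm y)
          (hg.div_const _).intervalIntegrable
    _ = (∫ y in Ioc (-(m : ℝ)) m, g y) / m := by
        rw [intervalIntegral.integral_div, intervalIntegral.integral_of_le hm_le]
    _ ≤ (∫ y, g y) / m :=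
        div_le_div_of_nonneg_right (setIntegral_le_integral hg (.of_forall hg₀)) m.cast_nonneg

lemma tendsto_integral_neg_nat_add_half_of_norm_le_exp {F : ℕ → ℝ → ℂ} {C c : ℝ} (hc : 0 < c)
    (hF : ∀ᶠ m : ℕ in atTop, ∀ x, ‖F m x‖ ≤ C * Real.exp (-c * m)) :
    Tendsto (fun m : ℕ => ∫ x in -((m : ℝ) + 1/2)..((m : ℝ) + 1/2), F m x) atTop (nhds 0) := by
  have hlim : Tendsto (fun x : ℝ => C * Real.exp (-c * x) * (2 * x + 1)) atTop (nhds 0) := by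
    have h₁ := tendsto_rpow_mul_exp_neg_mul_atTop_nhds_zero 1 c hc
    have h₀ := tendsto_rpow_mul_exp_neg_mul_atTop_nhds_zero 0 c hc
    have := ((h₁.const_mul 2).add h₀).const_mul C
    simp only [Real.rpow_one, Real.rpow_zero, one_mul, mul_zero, add_zero] at this
    exact this.congr fun x => by ring
  refine squeeze_zero_norm' ?_ (hlim.comp tendsto_natCast_atTop_atTop)
  filter_upwards [hF] with m hm
  have := intervalIntegral.norm_integral_le_of_norm_le_const
    (a := -((m : ℝ) + 1/2)) (b := (m : ℝ) + 1/2) (fun x _ => hm x)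
  rwa [show (m : ℝ) + 1/2 - -((m : ℝ) + 1/2) = 2 * m + 1 by ring,
    abs_of_pos (by positivity)] at this

/-- Let `k ≥ 1`, `γ ∈ (0, 2π)` and `h(z) = e^{iγz}/(z^k (e^{2πiz} - 1))`. The integral
of `h` over the positively oriented boundary of the rectangle with vertices
`±(m+1/2) ± im` (bottom side left-to-right, right side upwards, top side right-to-left,
left side downwards) tends to `0` as the positive integer `m` tends to infinity. -/
theorem statement10 (k : ℕ) (hk : 1 ≤ k)
    (γ : ℝ) (hγ₀ : 0 < γ) (hγ₁ : γ < 2 * Real.pi)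
    (h : ℂ → ℂ)
    (hh : ∀ z : ℂ, h z = Complex.exp (Complex.I * γ * z) /
      (z ^ k * (Complex.exp (2 * Real.pi * Complex.I * z) - 1))) :
    Tendsto (fun m : ℕ =>
        (∫ x in -((m : ℝ) + 1/2)..((m : ℝ) + 1/2), h ((x : ℂ) - Complex.I * (m : ℂ)))
        + Complex.I * (∫ y in -(m : ℝ)..(m : ℝ),
            h ((((m : ℝ) + 1/2 : ℝ) : ℂ) + Complex.I * (y : ℂ)))
        - (∫ x in -((m : ℝ) + 1/2)..((m : ℝ) + 1/2), h ((x : ℂ) + Complex.I * (m : ℂ)))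
        - Complex.I * ∫ y in -(m : ℝ)..(m : ℝ),
            h (-(((m : ℝ) + 1/2 : ℝ) : ℂ) + Complex.I * (y : ℂ)))
      atTop (nhds 0) := by
  have hc : 0 < min γ (2 * π - γ) := lt_min hγ₀ (by linarith)
  have bottom := tendsto_integral_neg_nat_add_half_of_norm_le_exp
    (F := fun m x => h (x - I * m)) (C := 2) hc (by
      filter_upwards [eventually_ge_atTop 1] with m hm x
      rw [hh]
      simpa using norm_cexp_div_pow_mul_le_of_one_le_abs_im γ hk (z := x - I * m)
        (by simpa using hm))
  have top := tendsto_integral_neg_nat_add_half_of_norm_le_exp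
    (F := fun m x => h (x + I * m)) (C := 2) hc (by
      filter_upwards [eventually_ge_atTop 1] with m hm x
      rw [hh]
      simpa using norm_cexp_div_pow_mul_le_of_one_le_abs_im γ hk (z := x + I * m)
        (by simpa using hm))
  have right := tendsto_integral_neg_nat_nat_of_norm_le_div
    (F := fun m y => h ((((m : ℝ) + 1/2 : ℝ) : ℂ) + I * y)) (integrable_exp_neg_mul_abs hc)
    (fun y => (Real.exp_pos _).le) (by
      filter_upwards [eventually_ge_atTop 1] with m hm y
      rw [hh]
      simpa using norm_cexp_div_pow_mul_le_of_re_eq_int_add_half γ hk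
        (z := (((m : ℝ) + 1/2 : ℝ) : ℂ) + I * y) (n := m) (by simp) (by simpa using hm)
        (le_abs.2 (.inl (by simp))))
  have left := tendsto_integral_neg_nat_nat_of_norm_le_div
    (F := fun m y => h (-(((m : ℝ) + 1/2 : ℝ) : ℂ) + I * y)) (integrable_exp_neg_mul_abs hc)
    (fun y => (Real.exp_pos _).le) (by
      filter_upwards [eventually_ge_atTop 1] with m hm y
      rw [hh]
      simpa using norm_cexp_div_pow_mul_le_of_re_eq_int_add_half γ hk
        (z := -(((m : ℝ) + 1/2 : ℝ) : ℂ) + I * y) (n := -m - 1) (by simp; ring)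
        (by simpa using hm) (le_abs.2 (.inr (by simp))))
  simpa using ((bottom.add (right.const_mul I)).sub top).sub (left.const_mul I)
end
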